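/- For every positive integer n, scc'(G_n) = n² + 4n + 2. -/

import Mathlib

open Finset

/-- A clique covering of `G`: a finite family of cliques covering every edge. -/
def IsCliqueCover {V : Type*} (G : SimpleGraph V) (𝒞 : Finset (Finset V)) : Prop :=
  (∀ C ∈ 𝒞, G.IsClique (C : Set V)) ∧
  ∀ u v, G.Adj u v → ∃ C ∈ 𝒞, u ∈ C ∧ v ∈ C

/-- A clique partition of `G`: every edge lies in exactly one clique of the family. -/
def IsCliquePartition {V : Type*} (G : SimpleGraph V) (𝒞 : Finset (Finset V)) : Prop :=
  (∀ C ∈ 𝒞, G.IsClique (C : Set V)) ∧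
  ∀ u v, G.Adj u v → ∃! C, C ∈ 𝒞 ∧ u ∈ C ∧ v ∈ C

/-- The sigma clique cover number: minimum total size of cliques in a clique covering. -/
noncomputable def scc {V : Type*} (G : SimpleGraph V) : ℕ :=
  sInf {k | ∃ 𝒞, IsCliqueCover G 𝒞 ∧ ∑ C ∈ 𝒞, C.card = k}

/-- The sigma clique partition number: minimum total size of cliques in a clique partition. -/
noncomputable def scp {V : Type*} (G : SimpleGraph V) : ℕ :=
  sInf {k | ∃ 𝒞, IsCliquePartition G 𝒞 ∧ ∑ C ∈ 𝒞, C.card = k}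

/-- The clique cover number: minimum number of cliques in a clique covering. -/
noncomputable def cc {V : Type*} (G : SimpleGraph V) : ℕ :=
  sInf {k | ∃ 𝒞, IsCliqueCover G 𝒞 ∧ 𝒞.card = k}

/-- The clique partition number: minimum number of cliques in a clique partition. -/
noncomputable def cp {V : Type*} (G : SimpleGraph V) : ℕ :=
  sInf {k | ∃ 𝒞, IsCliquePartition G 𝒞 ∧ 𝒞.card = k}

/-- `scc'`: the minimum total size of cliques over clique coverings achieving `cc G`. -/
noncomputable def scc' {V : Type*} (G : SimpleGraph V) : ℕ :=
  sInf {k | ∃ 𝒞, IsCliqueCover G 𝒞 ∧ 𝒞.card = cc G ∧ ∑ C ∈ 𝒞, C.card = k}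
/-- The vertex set of the graph `Gₙ`: `x₀`, `y₀`, `X = {x i}`, `Y = {y i}`, `Z = {z i}`. -/
inductive Vtx (n : ℕ) : Type where
  | x0 : Vtx n
  | y0 : Vtx n
  | x : Fin n → Vtx n
  | y : Fin n → Vtx n
  | z : Fin n → Vtx n
  deriving DecidableEq, Fintype

/-- Membership in `X ∪ {x₀}`. -/
def inXx0 {n : ℕ} : Vtx n → Prop
  | .x0 => True
  | .x _ => True
  | _ => False

/-- Membership in `Y ∪ {y₀}`. -/
def inYy0 {n : ℕ} : Vtx n → Prop
  | .y0 => True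
  | .y _ => True
  | _ => False

/-- Membership in `Z`. -/
def inZ {n : ℕ} : Vtx n → Prop
  | .z _ => True
  | _ => False

/-- Membership in `X ∪ Y`. -/
def inXY {n : ℕ} : Vtx n → Prop
  | .x _ => True
  | .y _ => True
  | _ => False

/-- `xyPair u v` holds iff `u = x i` and `v = y i` for some `i`. -/
def xyPair {n : ℕ} : Vtx n → Vtx n → Prop
  | .x i, .y j => i = j
  | _, _ => False

/-- The graph `Gₙ`: `X ∪ {x₀}`, `Y ∪ {y₀}` and `Z` are cliques, every vertex of `Z` is
adjacent to every vertex of `X ∪ Y`, and `x i` is adjacent to `y j` iff `i = j`. -/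
def Gn (n : ℕ) : SimpleGraph (Vtx n) where
  Adj u v := u ≠ v ∧ (inXx0 u ∧ inXx0 v ∨ inYy0 u ∧ inYy0 v ∨ inZ u ∧ inZ v ∨
    inZ u ∧ inXY v ∨ inXY u ∧ inZ v ∨ xyPair u v ∨ xyPair v u)
  symm := by
    refine ⟨?_⟩
    rintro u v ⟨h1, h2⟩
    exact ⟨h1.symm, by tauto⟩
  loopless := ⟨fun u h => h.1 rfl⟩

/-!
The `n + 2` edges `x₀x₁`, `y₀y₁` and `xᵢyᵢ` are pairwise not contained in a common clique, so
`cc(Gₙ) ≥ n + 2`, with equality for the cover by `X ∪ {x₀}`, `Y ∪ {y₀}` and the `{xᵢ, yᵢ} ∪ Z`.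
In a cover by exactly `n + 2` cliques each of these edges therefore lies in exactly one clique,
and every clique is the clique of one of them. The remaining edges are then forced: `x₀xⱼ`
can only share a clique with `x₀x₁`, `y₀yⱼ` with `y₀y₁`, and `xᵢz_k` with `xᵢyᵢ`. So each clique
of such a cover contains the corresponding clique of the explicit cover, whose sizes add up to
`2(n + 1) + n(n + 2)`.
-/

section CliqueCover

variable {V ι : Type*} {G : SimpleGraph V} {𝒞 : Finset (Finset V)}

theorem IsCliqueCover.exists_injective (h : IsCliqueCover G 𝒞) {e : ι → V × V}
    (hadj : ∀ a, G.Adj (e a).1 (e a).2)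
    (hsep : ∀ a b, G.IsClique ({(e a).1, (e a).2, (e b).1, (e b).2} : Set V) → a = b) :
    ∃ c : ι → Finset V, Function.Injective c ∧ ∀ a, c a ∈ 𝒞 ∧ (e a).1 ∈ c a ∧ (e a).2 ∈ c a := by
  choose c hc hfst hsnd using fun a => h.2 _ _ (hadj a)
  refine ⟨c, fun a b hab => hsep a b ((h.1 _ (hc b)).subset ?_), fun a => ⟨hc a, hfst a, hsnd a⟩⟩
  simp [Set.insert_subset_iff, hfst, hsnd, hab ▸ hfst a, hab ▸ hsnd a]

theorem IsCliqueCover.card_le [Fintype ι] (h : IsCliqueCover G 𝒞) {e : ι → V × V}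
    (hadj : ∀ a, G.Adj (e a).1 (e a).2)
    (hsep : ∀ a b, G.IsClique ({(e a).1, (e a).2, (e b).1, (e b).2} : Set V) → a = b) :
    Fintype.card ι ≤ 𝒞.card := by
  obtain ⟨c, hinj, hc⟩ := h.exists_injective hadj hsep
  rw [← card_univ]
  exact card_le_card_of_injOn c (fun a _ => (hc a).1) hinj.injOn

theorem IsCliqueCover.eq_image_of_card_le [Fintype ι] [DecidableEq V] (h : IsCliqueCover G 𝒞)
    {e : ι → V × V} (hadj : ∀ a, G.Adj (e a).1 (e a).2)
    (hsep : ∀ a b, G.IsClique ({(e a).1, (e a).2, (e b).1, (e b).2} : Set V) → a = b)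
    (hcard : 𝒞.card ≤ Fintype.card ι) :
    ∃ c : ι → Finset V, Function.Injective c ∧ 𝒞 = univ.image c ∧
      ∀ a, (e a).1 ∈ c a ∧ (e a).2 ∈ c a := by
  obtain ⟨c, hinj, hc⟩ := h.exists_injective hadj hsep
  refine ⟨c, hinj, (eq_of_subset_of_card_le ?_ ?_).symm, fun a => (hc a).2⟩
  · simpa [image_subset_iff] using fun a => (hc a).1
  · rwa [card_image_of_injective _ hinj, card_univ]

theorem IsCliqueCover.mem_of_forall_isClique_eq [Fintype ι] [DecidableEq V] {e : ι → V × V}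
    {c : ι → Finset V} (h : IsCliqueCover G (univ.image c))
    (hc : ∀ a, (e a).1 ∈ c a ∧ (e a).2 ∈ c a) {p q : V} (hpq : G.Adj p q) {a : ι}
    (huniq : ∀ b, G.IsClique ({p, q, (e b).1, (e b).2} : Set V) → b = a) :
    p ∈ c a ∧ q ∈ c a := by
  obtain ⟨C, hC, hp, hq⟩ := h.2 p q hpq
  obtain ⟨b, -, rfl⟩ := mem_image.1 hC
  obtain rfl := huniq b ((h.1 _ hC).subset (by simp [Set.insert_subset_iff, hp, hq, hc b]))
  exact ⟨hp, hq⟩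

end CliqueCover

namespace Gn

open Vtx

variable {n : ℕ}

@[simp] theorem adj_iff {u v : Vtx n} :
    (Gn n).Adj u v ↔ u ≠ v ∧ (inXx0 u ∧ inXx0 v ∨ inYy0 u ∧ inYy0 v ∨ inZ u ∧ inZ v ∨
      inZ u ∧ inXY v ∨ inXY u ∧ inZ v ∨ xyPair u v ∨ xyPair v u) :=
  Iff.rfl

attribute [local simp] inXx0 inYy0 inZ inXY xyPair

theorem x_injective : Function.Injective (x : Fin n → Vtx n) := fun _ _ => x.inj
theorem y_injective : Function.Injective (y : Fin n → Vtx n) := fun _ _ => y.inj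
theorem z_injective : Function.Injective (z : Fin n → Vtx n) := fun _ _ => z.inj

inductive Block (n : ℕ) : Type where
  | left : Block n
  | right : Block n
  | rung : Fin n → Block n
  deriving DecidableEq, Fintype

open Block

def block : Block n → Finset (Vtx n)
  | left => insert x0 (univ.image x)
  | right => insert y0 (univ.image y)
  | rung i => insert (x i) (insert (y i) (univ.image z))

def core (i₀ : Fin n) : Block n → Vtx n × Vtx n
  | left => (x0, x i₀)
  | right => (y0, y i₀)
  | rung i => (x i, y i)

theorem Block.exists_iff {P : Block n → Prop} :
    (∃ a, P a) ↔ P left ∨ P right ∨ ∃ i, P (rung i) := by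
  constructor
  · rintro ⟨_ | _ | i, h⟩
    exacts [Or.inl h, Or.inr (Or.inl h), Or.inr (Or.inr ⟨i, h⟩)]
  · rintro (h | h | ⟨i, h⟩) <;> exact ⟨_, h⟩

theorem Block.univ_eq :
    (univ : Finset (Block n)) = insert left (insert right (univ.image rung)) := by
  ext (_ | _ | i) <;> simp

theorem exists_block_of_adj {u v : Vtx n} (huv : (Gn n).Adj u v) :
    ∃ a, u ∈ block a ∧ v ∈ block a := by
  cases u <;> cases v <;> simp_all [block, Block.exists_iff]
  exact ⟨‹Fin n›⟩

theorem card_block_left : (block (left : Block n)).card = n + 1 := by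
  simp [block, card_image_of_injective _ x_injective]

theorem card_block_right : (block (right : Block n)).card = n + 1 := by
  simp [block, card_image_of_injective _ y_injective]

theorem card_block_rung (i : Fin n) : (block (rung i)).card = n + 2 := by
  simp [block, card_image_of_injective _ z_injective]

theorem sum_card_block : ∑ a : Block n, (block a).card = n ^ 2 + 4 * n + 2 := by
  rw [Block.univ_eq, sum_insert (by simp), sum_insert (by simp),
    sum_image fun _ _ _ _ => rung.inj, card_block_left, card_block_right]
  simp only [card_block_rung, sum_const, card_univ, Fintype.card_fin, smul_eq_mul]
  ring

theorem block_injective : Function.Injective (block : Block n → Finset (Vtx n)) := by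
  rintro (_ | _ | i) (_ | _ | j) h <;> simp only [block, Finset.ext_iff] at h <;>
    first | rfl | simpa using h x0 | simpa using h y0 | simpa using h (x i)

theorem isClique_block (a : Block n) : (Gn n).IsClique (block a : Set (Vtx n)) := by
  cases a <;> simp [block, Set.Pairwise]

theorem isCliqueCover_blocks : IsCliqueCover (Gn n) (univ.image block) := by
  refine ⟨by simpa using isClique_block, fun u v huv => ?_⟩
  obtain ⟨a, hu, hv⟩ := exists_block_of_adj huv
  exact ⟨block a, mem_image_of_mem _ (mem_univ a), hu, hv⟩

theorem card_blocks : (univ.image (block (n := n))).card = Fintype.card (Block n) := by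
  rw [card_image_of_injective _ block_injective, card_univ]

theorem sum_card_blocks : ∑ C ∈ univ.image (block (n := n)), C.card = n ^ 2 + 4 * n + 2 := by
  rw [sum_image fun _ _ _ _ h => block_injective h, sum_card_block]

section Core

variable (i₀ : Fin n)

theorem adj_core (a : Block n) : (Gn n).Adj (core i₀ a).1 (core i₀ a).2 := by
  cases a <;> simp [core]

theorem eq_left_of_isClique (j : Fin n) (b : Block n)
    (h : (Gn n).IsClique ({x0, x j, (core i₀ b).1, (core i₀ b).2} : Set (Vtx n))) : b = left := by
  cases b <;> simp_all [core]

theorem eq_right_of_isClique (j : Fin n) (b : Block n)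
    (h : (Gn n).IsClique ({y0, y j, (core i₀ b).1, (core i₀ b).2} : Set (Vtx n))) : b = right := by
  cases b <;> simp_all [core]

theorem eq_rung_of_isClique_x_y (i : Fin n) (b : Block n)
    (h : (Gn n).IsClique ({x i, y i, (core i₀ b).1, (core i₀ b).2} : Set (Vtx n))) :
    b = rung i := by
  cases b <;> simp_all [core, eq_comm]

theorem eq_rung_of_isClique_x_z (i k : Fin n) (b : Block n)
    (h : (Gn n).IsClique ({x i, z k, (core i₀ b).1, (core i₀ b).2} : Set (Vtx n))) :
    b = rung i := by
  cases b <;> simp_all [core, eq_comm]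

theorem eq_of_isClique_core (a b : Block n)
    (h : (Gn n).IsClique
      ({(core i₀ a).1, (core i₀ a).2, (core i₀ b).1, (core i₀ b).2} : Set (Vtx n))) :
    a = b := by
  cases a
  exacts [(eq_left_of_isClique i₀ i₀ b h).symm, (eq_right_of_isClique i₀ i₀ b h).symm,
    (eq_rung_of_isClique_x_y i₀ _ b h).symm]

theorem block_subset {c : Block n → Finset (Vtx n)} (h : IsCliqueCover (Gn n) (univ.image c))
    (hc : ∀ a, (core i₀ a).1 ∈ c a ∧ (core i₀ a).2 ∈ c a) (a : Block n) : block a ⊆ c a := by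
  intro w hw
  cases a with
  | left =>
    obtain rfl | ⟨j, -, rfl⟩ := by simpa [block] using hw
    exacts [(hc left).1, (h.mem_of_forall_isClique_eq hc (by simp) (eq_left_of_isClique i₀ j)).2]
  | right =>
    obtain rfl | ⟨j, -, rfl⟩ := by simpa [block] using hw
    exacts [(hc right).1, (h.mem_of_forall_isClique_eq hc (by simp) (eq_right_of_isClique i₀ j)).2]
  | rung i =>
    obtain rfl | rfl | ⟨k, -, rfl⟩ := by simpa [block] using hw
    exacts [(hc (rung i)).1, (hc (rung i)).2,
      (h.mem_of_forall_isClique_eq hc (by simp) (eq_rung_of_isClique_x_z i₀ i k)).2]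

end Core

theorem cc_eq (hn : 0 < n) : cc (Gn n) = Fintype.card (Block n) := by
  refine IsLeast.csInf_eq ⟨⟨_, isCliqueCover_blocks, card_blocks⟩, ?_⟩
  rintro k ⟨𝒞, h, rfl⟩
  exact h.card_le (adj_core ⟨0, hn⟩) (eq_of_isClique_core ⟨0, hn⟩)

theorem sum_card_le (hn : 0 < n) {𝒞 : Finset (Finset (Vtx n))} (h : IsCliqueCover (Gn n) 𝒞)
    (hcard : 𝒞.card ≤ Fintype.card (Block n)) : n ^ 2 + 4 * n + 2 ≤ ∑ C ∈ 𝒞, C.card := by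
  let i₀ : Fin n := ⟨0, hn⟩
  obtain ⟨c, hinj, rfl, hc⟩ := h.eq_image_of_card_le (adj_core i₀) (eq_of_isClique_core i₀) hcard
  rw [sum_image fun _ _ _ _ hab => hinj hab, ← sum_card_block]
  exact sum_le_sum fun a _ => card_le_card (block_subset i₀ h hc a)

end Gn

/-- For every positive integer `n`, `scc'(Gₙ) = n² + 4n + 2`. -/
theorem stmt_3 (n : ℕ) (hn : 1 ≤ n) : scc' (Gn n) = n ^ 2 + 4 * n + 2 := by
  have hcc := Gn.cc_eq hn
  refine IsLeast.csInf_eq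
    ⟨⟨_, Gn.isCliqueCover_blocks, hcc ▸ Gn.card_blocks, Gn.sum_card_blocks⟩, ?_⟩
  rintro k ⟨𝒞, h, hk, rfl⟩
  exact Gn.sum_card_le hn h (hcc ▸ hk).le
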